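/- For every integer k ≥ 0, the identity ∑_{l=2}^∞ (l+k)·l·(l+1)·c(l,k) = 6·∑_{s=1}^k c(1,s) holds (both sides being finite). -/
import Mathlib


open scoped Classical

/-- The constants `c(l,k)`: `c(l,0) = c(0,k) = 0`,
`c(1,k) = (2k²+14k)/((k+1)(k+2)(k+3)(k+4))` for `k ≥ 1`, and for `l > 1`, `k > 0`,
`c(l,k) = c(l,k-1)·(l+k-1)/(2l+k+2) + c(l-1,k)·(l-1)/(2l+k+2)`. -/
noncomputable def c : ℕ → ℕ → ℝ
  | _, 0 => 0
  | 0, _ => 0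
  | 1, k + 1 =>
      (2 * ((k : ℝ) + 1) ^ 2 + 14 * ((k : ℝ) + 1)) /
        (((k : ℝ) + 2) * ((k : ℝ) + 3) * ((k : ℝ) + 4) * ((k : ℝ) + 5))
  | l + 2, k + 1 =>
      c (l + 2) k * ((l : ℝ) + (k : ℝ) + 2) / (2 * (l : ℝ) + (k : ℝ) + 7) +
      c (l + 1) (k + 1) * ((l : ℝ) + 1) / (2 * (l : ℝ) + (k : ℝ) + 7)
termination_by l k => (l, k)

lemma c_zero (l : ℕ) : c l 0 = 0 := by cases l <;> simp [c]

lemma c_one (k : ℕ) : c 1 (k+1) = (2 * ((k : ℝ) + 1) ^ 2 + 14 * ((k : ℝ) + 1)) /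
        (((k : ℝ) + 2) * ((k : ℝ) + 3) * ((k : ℝ) + 4) * ((k : ℝ) + 5)) := by rw [c]

lemma c_rec (l k : ℕ) : c (l+2) (k+1) =
      c (l + 2) k * ((l : ℝ) + (k : ℝ) + 2) / (2 * (l : ℝ) + (k : ℝ) + 7) +
      c (l + 1) (k + 1) * ((l : ℝ) + 1) / (2 * (l : ℝ) + (k : ℝ) + 7) := by rw [c]

lemma c_nonneg : ∀ s l : ℕ, 0 ≤ c l s := by
  intro s
  induction s with
  | zero => intro l; rw [c_zero]
  | succ k ih =>
    intro l
    induction l with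
    | zero => simp [c]
    | succ m ihm =>
      match m with
      | 0 => rw [c_one]; positivity
      | n + 1 =>
        rw [c_rec]
        have h1 := ih (n + 2)
        have h2 := ihm
        have hd : (0:ℝ) < 2 * (n:ℝ) + (k:ℝ) + 7 := by positivity
        have ha : (0:ℝ) ≤ (n:ℝ) + (k:ℝ) + 2 := by positivity
        have hb : (0:ℝ) ≤ (n:ℝ) + 1 := by positivity
        have := mul_nonneg h1 ha
        have := mul_nonneg h2 hb
        positivity

lemma c_le : ∀ s l : ℕ, c l s ≤ 3 ^ s * (3/4 : ℝ) ^ l := by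
  intro s
  induction s with
  | zero => intro l; rw [c_zero]; positivity
  | succ k ih =>
    intro l
    induction l with
    | zero => simp [c]
    | succ m ihm =>
      match m with
      | 0 =>
        rw [c_one]
        have hx : (0:ℝ) ≤ (k:ℝ) := Nat.cast_nonneg k
        have hden : (0:ℝ) < ((k : ℝ) + 2) * ((k : ℝ) + 3) * ((k : ℝ) + 4) * ((k : ℝ) + 5) := by
          positivity
        have h1 : (2 * ((k : ℝ) + 1) ^ 2 + 14 * ((k : ℝ) + 1)) /
            (((k : ℝ) + 2) * ((k : ℝ) + 3) * ((k : ℝ) + 4) * ((k : ℝ) + 5)) ≤ 1 := by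
          rw [div_le_one hden]
          nlinarith [sq_nonneg ((k:ℝ)), sq_nonneg ((k:ℝ)+1), mul_nonneg hx hx,
            mul_nonneg (mul_nonneg hx hx) hx, sq_nonneg ((k:ℝ)*(k:ℝ))]
        have h2 : (1:ℝ) ≤ 3 ^ (k+1) * (3/4 : ℝ) ^ 1 := by
          have : (3:ℝ) ≤ 3 ^ (k+1) := by
            calc (3:ℝ) = 3 ^ 1 := by norm_num
            _ ≤ 3 ^ (k+1) := by
              apply pow_le_pow_right₀ (by norm_num) (by omega)
          nlinarith
        linarith
      | n + 1 =>
        rw [c_rec]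
        have hd : (0:ℝ) < 2 * (n:ℝ) + (k:ℝ) + 7 := by positivity
        have hA : ((n:ℝ) + (k:ℝ) + 2) / (2 * (n:ℝ) + (k:ℝ) + 7) ≤ 1 := by
          rw [div_le_one hd]; linarith [Nat.cast_nonneg (α := ℝ) n]
        have hB : ((n:ℝ) + 1) / (2 * (n:ℝ) + (k:ℝ) + 7) ≤ 1/2 := by
          rw [div_le_iff₀ hd]; linarith [Nat.cast_nonneg (α := ℝ) k]
        have hA0 : (0:ℝ) ≤ ((n:ℝ) + (k:ℝ) + 2) / (2 * (n:ℝ) + (k:ℝ) + 7) := by positivity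
        have hB0 : (0:ℝ) ≤ ((n:ℝ) + 1) / (2 * (n:ℝ) + (k:ℝ) + 7) := by positivity
        have h1 := ih (n + 2)
        have h2 := ihm
        have hb1 : (0:ℝ) ≤ 3 ^ k * (3/4 : ℝ) ^ (n+2) := by positivity
        have hb2 : (0:ℝ) ≤ 3 ^ (k+1) * (3/4 : ℝ) ^ (n+1) := by positivity
        calc c (n + 2) k * ((n : ℝ) + (k : ℝ) + 2) / (2 * (n : ℝ) + (k : ℝ) + 7) +
              c (n + 1) (k + 1) * ((n : ℝ) + 1) / (2 * (n : ℝ) + (k : ℝ) + 7)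
            = c (n + 2) k * (((n : ℝ) + (k : ℝ) + 2) / (2 * (n : ℝ) + (k : ℝ) + 7)) +
              c (n + 1) (k + 1) * (((n : ℝ) + 1) / (2 * (n : ℝ) + (k : ℝ) + 7)) := by ring
          _ ≤ (3 ^ k * (3/4 : ℝ) ^ (n+2)) * 1 + (3 ^ (k+1) * (3/4 : ℝ) ^ (n+1)) * (1/2) := by
              apply add_le_add
              · exact mul_le_mul h1 hA hA0 hb1
              · exact mul_le_mul h2 hB hB0 hb2
          _ = 3 ^ (k+1) * (3/4 : ℝ) ^ (n+2) := by
              rw [pow_succ (3:ℝ) k, pow_succ (3/4:ℝ) (n+1), pow_succ (3/4:ℝ) n]; ring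

lemma key (k : ℕ) : ∀ l : ℕ,
    ((l:ℝ) + 2 + (k:ℝ)) * ((l:ℝ) + 2) * ((l:ℝ) + 3) * c (l+2) k
      = ((l:ℝ)+1) * ((l:ℝ)+2) * ((l:ℝ)+3) * (∑ s ∈ Finset.Icc 1 k, c (l+1) s)
        - ((l:ℝ)+2) * ((l:ℝ)+3) * ((l:ℝ)+4) * (∑ s ∈ Finset.Icc 1 k, c (l+2) s) := by
  induction k with
  | zero => intro l; simp [c_zero]
  | succ k ih =>
    intro l
    rw [Finset.sum_Icc_succ_top (by omega : 1 ≤ k + 1),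
      Finset.sum_Icc_succ_top (by omega : 1 ≤ k + 1)]
    have hrec := c_rec l k
    have hd : (2 * (l:ℝ) + (k:ℝ) + 7) ≠ 0 := by positivity
    have hrec' : (2 * (l:ℝ) + (k:ℝ) + 7) * c (l+2) (k+1)
        = c (l + 2) k * ((l : ℝ) + (k : ℝ) + 2) + c (l + 1) (k + 1) * ((l : ℝ) + 1) := by
      rw [hrec]; field_simp
    have ihl := ih l
    push_cast
    linear_combination ihl + (((l:ℝ)+2) * ((l:ℝ)+3)) * hrec'

/-- For every `k ≥ 0`, `∑_{l=2}^∞ (l+k)·l·(l+1)·c(l,k) = 6·∑_{s=1}^k c(1,s)`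
(both sides being finite). -/
theorem weighted_column_sum_c :
    ∀ k : ℕ,
      HasSum
        (fun l : ℕ => ((l : ℝ) + 2 + (k : ℝ)) * ((l : ℝ) + 2) * ((l : ℝ) + 3) * c (l + 2) k)
        (6 * ∑ s ∈ Finset.Icc 1 k, c 1 s) := by
  intro k
  set g : ℕ → ℝ := fun l => ((l:ℝ)+1) * ((l:ℝ)+2) * ((l:ℝ)+3) * (∑ s ∈ Finset.Icc 1 k, c (l+1) s)
    with hg
  have hterm : ∀ l : ℕ, ((l : ℝ) + 2 + (k : ℝ)) * ((l : ℝ) + 2) * ((l : ℝ) + 3) * c (l + 2) k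
      = g l - g (l+1) := by
    intro l
    have := key k l
    rw [this, hg]
    push_cast
    ring_nf
  have hnn : ∀ l : ℕ, 0 ≤ ((l : ℝ) + 2 + (k : ℝ)) * ((l : ℝ) + 2) * ((l : ℝ) + 3) * c (l + 2) k := by
    intro l
    have := c_nonneg k (l+2)
    positivity
  rw [hasSum_iff_tendsto_nat_of_nonneg hnn]
  have hpart : ∀ n : ℕ, (∑ l ∈ Finset.range n,
      ((l : ℝ) + 2 + (k : ℝ)) * ((l : ℝ) + 2) * ((l : ℝ) + 3) * c (l + 2) k) = g 0 - g n := by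
    intro n
    calc (∑ l ∈ Finset.range n,
        ((l : ℝ) + 2 + (k : ℝ)) * ((l : ℝ) + 2) * ((l : ℝ) + 3) * c (l + 2) k)
        = ∑ l ∈ Finset.range n, (g l - g (l+1)) := by
          exact Finset.sum_congr rfl fun l _ => hterm l
      _ = g 0 - g n := Finset.sum_range_sub' g n
  simp_rw [hpart]
  have hg0 : g 0 = 6 * ∑ s ∈ Finset.Icc 1 k, c 1 s := by
    norm_num [hg]
  -- show g n → 0
  have hgtend : Filter.Tendsto g Filter.atTop (nhds 0) := by
    have hK : (0:ℝ) ≤ 64 * (k:ℝ) * 3 ^ k := by positivity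
    have hu : Filter.Tendsto (fun n : ℕ => (64 * (k:ℝ) * 3 ^ k) * ((n:ℝ) ^ 3 * (3/4:ℝ) ^ n))
        Filter.atTop (nhds 0) := by
      have hs : Filter.Tendsto (fun n : ℕ => ((n:ℝ) ^ 3 * (3/4:ℝ) ^ n))
          Filter.atTop (nhds 0) := by
        have : Summable (fun n : ℕ => ((n:ℝ) ^ 3 * (3/4:ℝ) ^ n)) :=
          summable_pow_mul_geometric_of_norm_lt_one 3 (by rw [Real.norm_eq_abs, abs_lt]; constructor <;> norm_num)
        exact this.tendsto_atTop_zero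
      simpa using hs.const_mul (64 * (k:ℝ) * 3 ^ k)
    apply squeeze_zero' (t₀ := Filter.atTop)
    · filter_upwards with n
      have hsum : 0 ≤ ∑ s ∈ Finset.Icc 1 k, c (n+1) s :=
        Finset.sum_nonneg fun s _ => c_nonneg s (n+1)
      positivity
    · filter_upwards [Filter.eventually_ge_atTop 1] with n hn
      have hn1 : (1:ℝ) ≤ (n:ℝ) := by exact_mod_cast hn
      have hsb : (∑ s ∈ Finset.Icc 1 k, c (n+1) s) ≤ (k:ℝ) * (3 ^ k * (3/4:ℝ) ^ (n+1)) := by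
        calc (∑ s ∈ Finset.Icc 1 k, c (n+1) s)
            ≤ ∑ s ∈ Finset.Icc 1 k, (3:ℝ) ^ k * (3/4:ℝ) ^ (n+1) := by
              apply Finset.sum_le_sum
              intro s hs
              have := c_le s (n+1)
              have h3 : (3:ℝ) ^ s ≤ 3 ^ k :=
                pow_le_pow_right₀ (by norm_num) (Finset.mem_Icc.mp hs).2
              have hp : (0:ℝ) ≤ (3/4:ℝ) ^ (n+1) := by positivity
              calc c (n+1) s ≤ (3:ℝ) ^ s * (3/4:ℝ) ^ (n+1) := this
                _ ≤ (3:ℝ) ^ k * (3/4:ℝ) ^ (n+1) := by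
                    exact mul_le_mul_of_nonneg_right h3 hp
          _ = (k:ℝ) * (3 ^ k * (3/4:ℝ) ^ (n+1)) := by
              rw [Finset.sum_const, Nat.card_Icc]
              simp [nsmul_eq_mul]
      have hcube : ((n:ℝ)+1) * ((n:ℝ)+2) * ((n:ℝ)+3) ≤ 64 * (n:ℝ) ^ 3 := by
        nlinarith [sq_nonneg ((n:ℝ) - 1), sq_nonneg (n:ℝ)]
      have hpos : (0:ℝ) ≤ ((n:ℝ)+1) * ((n:ℝ)+2) * ((n:ℝ)+3) := by positivity
      have hsum0 : 0 ≤ ∑ s ∈ Finset.Icc 1 k, c (n+1) s :=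
        Finset.sum_nonneg fun s _ => c_nonneg s (n+1)
      calc g n = ((n:ℝ)+1) * ((n:ℝ)+2) * ((n:ℝ)+3) * (∑ s ∈ Finset.Icc 1 k, c (n+1) s) := rfl
        _ ≤ ((n:ℝ)+1) * ((n:ℝ)+2) * ((n:ℝ)+3) * ((k:ℝ) * (3 ^ k * (3/4:ℝ) ^ (n+1))) :=
            mul_le_mul_of_nonneg_left hsb hpos
        _ ≤ 64 * (n:ℝ) ^ 3 * ((k:ℝ) * (3 ^ k * (3/4:ℝ) ^ (n+1))) := by
            apply mul_le_mul_of_nonneg_right hcube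
            positivity
        _ ≤ (64 * (k:ℝ) * 3 ^ k) * ((n:ℝ) ^ 3 * (3/4:ℝ) ^ n) := by
            have hX : (0:ℝ) ≤ (64 * (k:ℝ) * 3 ^ k) * ((n:ℝ) ^ 3 * (3/4:ℝ) ^ n) := by positivity
            have hle := mul_le_of_le_one_right hX (by norm_num : (3/4:ℝ) ≤ 1)
            calc 64 * (n:ℝ) ^ 3 * ((k:ℝ) * (3 ^ k * (3/4:ℝ) ^ (n+1)))
                = (64 * (k:ℝ) * 3 ^ k) * ((n:ℝ) ^ 3 * (3/4:ℝ) ^ n) * (3/4) := by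
                  rw [pow_succ]; ring
              _ ≤ _ := hle
    · exact hu
  rw [hg0] at hpart ⊢
  have : Filter.Tendsto (fun n : ℕ => (6 * ∑ s ∈ Finset.Icc 1 k, c 1 s) - g n)
      Filter.atTop (nhds ((6 * ∑ s ∈ Finset.Icc 1 k, c 1 s) - 0)) :=
    Filter.Tendsto.sub tendsto_const_nhds hgtend
  simpa using this
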